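/- Let n > 0, R > 0, c > 0, I ≠ 0, C₀ > 0 be real constants, and define F(ρ, r) = 1/(2r⁴ρ²) + (Rc(n+2)/(2I²))·ρ^(2/n) − C₀ for ρ, r > 0. Set ρ* = (2I²nC₀/(Rc(n+1)(n+2)))^(n/2). Then for each fixed r > r_min, where r_min = (2ρ*²(C₀ − R·c·(n/2+1)·ρ*^(2/n)/I²))^(−1/4), there exists ρ > 0 with F(ρ, r) = 0. -/

import Mathlib

/-!
With `b = 2 r⁴` and `k = R c (n + 2) / (2 I²)`, the function `ρ ↦ 1 / (b ρ²) + k ρ^(2/n) - C₀`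
is continuous on `(0, ∞)` and tends to `+∞` as `ρ → 0⁺`, so by the intermediate value theorem it
suffices to find one `ρ > 0` where it is nonpositive. At `ρ*` one has `k ρ*^(2/n) = n C₀ / (n + 1)`,
so its value there is `1 / (2 r⁴ ρ*²) - C₀ / (n + 1)`, and `r_min` is exactly the radius at which
this vanishes.
-/

open Real Filter Topology Set

lemma tendsto_one_div_mul_sq_add_mul_rpow_sub_nhdsGT_zero {b k p C : ℝ} (hb : 0 < b)
    (hk : 0 ≤ k) :
    Tendsto (fun ρ : ℝ => 1 / (b * ρ ^ 2) + k * ρ ^ p - C) (𝓝[>] 0) atTop := by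
  have hsq : Tendsto (fun ρ : ℝ => b * ρ ^ 2) (𝓝[>] 0) (𝓝[>] 0) := by
    refine tendsto_nhdsWithin_of_tendsto_nhds_of_eventually_within _ ?_ ?_
    · simpa using ((by fun_prop : Continuous fun ρ : ℝ => b * ρ ^ 2).tendsto 0).mono_left
        nhdsWithin_le_nhds
    · filter_upwards [self_mem_nhdsWithin] with ρ (hρ : 0 < ρ) using mul_pos hb (pow_pos hρ 2)
  have hpow : (0 : ℝ → ℝ) ≤ᶠ[𝓝[>] 0] fun ρ => k * ρ ^ p := by
    filter_upwards [self_mem_nhdsWithin] with ρ (hρ : 0 < ρ) using by positivity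
  simp only [one_div, sub_eq_add_neg]
  exact tendsto_atTop_add_const_right _ _
    ((tendsto_inv_nhdsGT_zero.comp hsq).atTop_add_zero_eventuallyLE hpow)

lemma exists_pos_one_div_mul_sq_add_mul_rpow_sub_eq_zero {b k p C ρ₁ : ℝ} (hb : 0 < b)
    (hk : 0 ≤ k) (hρ₁ : 0 < ρ₁) (hle : 1 / (b * ρ₁ ^ 2) + k * ρ₁ ^ p - C ≤ 0) :
    ∃ ρ > (0 : ℝ), 1 / (b * ρ ^ 2) + k * ρ ^ p - C = 0 := by
  have hcont : ContinuousOn (fun ρ : ℝ => 1 / (b * ρ ^ 2) + k * ρ ^ p - C) (Ioi 0) := by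
    refine fun ρ (hρ : 0 < ρ) => ContinuousAt.continuousWithinAt ?_
    fun_prop (disch := simp [hρ.ne', hb.ne'])
  obtain ⟨ρ, hρ, hroot⟩ := isPreconnected_Ioi.intermediate_value_Ici (l := 𝓝[>] 0) hρ₁
    inf_le_right hcont
    (tendsto_one_div_mul_sq_add_mul_rpow_sub_nhdsGT_zero hb hk) hle
  exact ⟨ρ, hρ, hroot⟩

lemma one_lt_mul_pow_of_rpow_neg_inv_lt {x r : ℝ} {m : ℕ} (hm : m ≠ 0) (hx : 0 < x)
    (h : x ^ (-(1 / m : ℝ)) < r) : 1 < x * r ^ m := by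
  set y := x ^ (1 / m : ℝ) with hy
  have hy_pos : 0 < y := rpow_pos_of_pos hx _
  have hy_pow : y ^ m = x := by rw [hy, one_div, rpow_inv_natCast_pow hx.le hm]
  rw [rpow_neg hx.le, ← hy, inv_lt_iff_one_lt_mul₀' hy_pos] at h
  simpa [← hy_pow, mul_pow] using one_lt_pow₀ h hm

/-- Existence of a positive root of the implicit ideal-gas relation for radii above
the threshold radius. -/
theorem exists_density_of_radius_gt
    (n R c I C₀ : ℝ) (hn : 0 < n) (hR : 0 < R) (hc : 0 < c) (hI : I ≠ 0) (hC₀ : 0 < C₀)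
    (F : ℝ → ℝ → ℝ)
    (hF : ∀ ρ r, F ρ r = 1 / (2 * r ^ 4 * ρ ^ 2)
        + (R * c * (n + 2) / (2 * I ^ 2)) * ρ ^ (2 / n) - C₀)
    (ρstar : ℝ)
    (hρstar : ρstar = (2 * I ^ 2 * n * C₀ / (R * c * (n + 1) * (n + 2))) ^ (n / 2))
    (rmin : ℝ)
    (hrmin : rmin = (2 * ρstar ^ 2
        * (C₀ - R * c * (n / 2 + 1) * ρstar ^ (2 / n) / I ^ 2)) ^ (-(1 / 4) : ℝ))
    (r : ℝ) (hr : rmin < r) :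
    ∃ ρ > (0 : ℝ), F ρ r = 0 := by
  set B := 2 * I ^ 2 * n * C₀ / (R * c * (n + 1) * (n + 2)) with hB_def
  have hB : 0 < B := by positivity
  have hρstar_pos : 0 < ρstar := hρstar ▸ rpow_pos_of_pos hB _
  have hρstar_rpow : ρstar ^ (2 / n) = B := by
    rw [hρstar, ← inv_div, rpow_inv_rpow hB.le (by positivity)]
  have hkB : R * c * (n + 2) / (2 * I ^ 2) * B = n * C₀ / (n + 1) := by
    rw [hB_def]
    field_simp
  have hgap : C₀ - R * c * (n / 2 + 1) * B / I ^ 2 = C₀ / (n + 1) := by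
    rw [hB_def]
    field_simp
    ring
  have hbase : 0 < 2 * ρstar ^ 2 * (C₀ / (n + 1)) := by positivity
  rw [hρstar_rpow, hgap] at hrmin
  have hr_pos : 0 < r := (hrmin ▸ rpow_pos_of_pos hbase _).trans hr
  have hr4 : 1 < 2 * ρstar ^ 2 * (C₀ / (n + 1)) * r ^ 4 :=
    one_lt_mul_pow_of_rpow_neg_inv_lt four_ne_zero hbase (by exact_mod_cast hrmin ▸ hr)
  have hρstar_term : 1 / (2 * r ^ 4 * ρstar ^ 2) < C₀ / (n + 1) := by
    rw [div_lt_iff₀ (by positivity)]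
    linarith
  simp only [hF]
  refine exists_pos_one_div_mul_sq_add_mul_rpow_sub_eq_zero (by positivity) (by positivity)
    hρstar_pos ?_
  rw [hρstar_rpow, hkB]
  have hdeficit : n * C₀ / (n + 1) - C₀ = -(C₀ / (n + 1)) := by
    field_simp
    ring
  linarith
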